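/- Let $(\Omega,\mu)$ be a measure space, $M$ a Young function, and $u:\Omega\to\mathbb{R}$ measurable with $\int_\Omega M(u/k)\,d\mu<\infty$ for every $k>0$ (i.e. $u\in E_M$). Let $\bar M$ be the complementary Young function with derivative convention $\bar M^{-1}$ the inverse on $[0,\infty)$, and let $b,c>0$ and $d\in L^{\bar M}(\mu)$ with $\int_\Omega \bar M(d/k)\,d\mu<\infty$ for all $k>0$. Then any measurable function $F$ with $|F|\le d + b\,\bar M^{-1}(M(c u))$ pointwise satisfies $F\in L^{\bar M}(\mu)$, i.e. there exists $k>0$ with $\int_\Omega \bar M(F/k)\,d\mu<\infty$. -/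

import Mathlib

open MeasureTheory

/-- Abstract version of Lemma 3.2: if `u ∈ E_M(μ)` and `|F| ≤ d + b M̄⁻¹(M(cu))`
with `d ∈ E_{M̄}(μ)`, then `F ∈ L_{M̄}(μ)`. -/
theorem growth_bound_in_LMbar
    {Ω : Type*} [MeasurableSpace Ω] (μ : Measure Ω)
    (M : ℝ → ℝ)
    (hM_even : ∀ t, M (-t) = M t)
    (hM_convex : ConvexOn ℝ Set.univ M)
    (hM_zero : M 0 = 0)
    (hM_nonneg : ∀ t, 0 ≤ M t)
    (Mbar : ℝ → ℝ)
    (hMbar_even : ∀ t, Mbar (-t) = Mbar t)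
    (hMbar_convex : ConvexOn ℝ Set.univ Mbar)
    (hMbar_zero : Mbar 0 = 0)
    (hMbar_nonneg : ∀ t, 0 ≤ Mbar t)
    (hMbar_mono : MonotoneOn Mbar (Set.Ici (0 : ℝ)))
    (Mbarinv : ℝ → ℝ)
    (hMbarinv_nonneg : ∀ s, 0 ≤ s → 0 ≤ Mbarinv s)
    (hMbarinv : ∀ s, 0 ≤ s → Mbar (Mbarinv s) ≤ s)
    (b c : ℝ) (hb : 0 < b) (hc : 0 < c)
    (u : Ω → ℝ) (hu_meas : Measurable u)
    (hu : ∀ k : ℝ, 0 < k → ∫⁻ x, ENNReal.ofReal (M (u x / k)) ∂μ < ⊤)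
    (d : Ω → ℝ) (hd_meas : Measurable d) (hd_nonneg : ∀ x, 0 ≤ d x)
    (hd : ∀ k : ℝ, 0 < k → ∫⁻ x, ENNReal.ofReal (Mbar (d x / k)) ∂μ < ⊤)
    (F : Ω → ℝ) (hF_meas : Measurable F)
    (hF : ∀ x, |F x| ≤ d x + b * Mbarinv (M (c * u x))) :
    ∃ k : ℝ, 0 < k ∧ ∫⁻ x, ENNReal.ofReal (Mbar (F x / k)) ∂μ < ⊤ := by
  have hMbar_cont : Continuous Mbar :=
    continuousOn_univ.mp (hMbar_convex.continuousOn isOpen_univ)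
  have hM_cont : Continuous M :=
    continuousOn_univ.mp (hM_convex.continuousOn isOpen_univ)
  set a : ℝ := max b 1 with ha_def
  have ha1 : (1:ℝ) ≤ a := le_max_right _ _
  have ha0 : (0:ℝ) < a := lt_of_lt_of_le one_pos ha1
  have hba : b ≤ a := le_max_left _ _
  refine ⟨2 * a, by positivity, ?_⟩
  -- pointwise bound
  have key : ∀ x, Mbar (F x / (2 * a)) ≤
      (1/2) * Mbar (d x / a) + (1/2) * M (c * u x) := by
    intro x
    set g : ℝ := Mbarinv (M (c * u x)) with hg_def
    have hg0 : 0 ≤ g := hMbarinv_nonneg _ (hM_nonneg _)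
    -- Mbar (F x / (2a)) = Mbar (|F x| / (2a))
    have heq : Mbar (F x / (2 * a)) = Mbar (|F x| / (2 * a)) := by
      rcases abs_choice (F x) with h | h
      · rw [h]
      · rw [h, neg_div, hMbar_even]
    rw [heq]
    have h1 : |F x| / (2 * a) ≤ (d x + b * g) / (2 * a) := by
      apply div_le_div_of_nonneg_right (hF x)
      · positivity
    have hmem1 : |F x| / (2 * a) ∈ Set.Ici (0:ℝ) := by
      have := abs_nonneg (F x); exact div_nonneg this (by positivity)
    have hmem2 : (d x + b * g) / (2 * a) ∈ Set.Ici (0:ℝ) := by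
      have : 0 ≤ d x + b * g := add_nonneg (hd_nonneg x) (by positivity)
      exact div_nonneg this (by positivity)
    refine le_trans (hMbar_mono hmem1 hmem2 h1) ?_
    -- convexity: Mbar ((d + b g)/(2a)) ≤ ½ Mbar(d/a) + ½ Mbar(b g / a)
    have hconv := hMbar_convex.2 (Set.mem_univ (d x / a)) (Set.mem_univ (b * g / a))
      (by norm_num : (0:ℝ) ≤ 1/2) (by norm_num : (0:ℝ) ≤ 1/2) (by norm_num)
    simp only [smul_eq_mul] at hconv
    have harg : (1/2 : ℝ) * (d x / a) + (1/2 : ℝ) * (b * g / a) = (d x + b * g) / (2 * a) := by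
      field_simp
    rw [harg] at hconv
    refine hconv.trans ?_
    have h2 : Mbar (b * g / a) ≤ M (c * u x) := by
      have hle : b * g / a ≤ g := by
        rw [div_le_iff₀ ha0]
        have : b * g ≤ a * g := mul_le_mul_of_nonneg_right hba hg0
        linarith [this]
      have := hMbar_mono (Set.mem_Ici.mpr (by positivity : (0:ℝ) ≤ b * g / a))
        (Set.mem_Ici.mpr hg0) hle
      exact this.trans (hMbarinv _ (hM_nonneg _))
    nlinarith [h2]
  -- integrate
  have hmeas1 : Measurable fun x => ENNReal.ofReal ((1/2) * Mbar (d x / a)) := by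
    apply ENNReal.measurable_ofReal.comp
    exact (measurable_const.mul (hMbar_cont.measurable.comp (hd_meas.div_const a)))
  calc ∫⁻ x, ENNReal.ofReal (Mbar (F x / (2*a))) ∂μ
      ≤ ∫⁻ x, ENNReal.ofReal ((1/2) * Mbar (d x / a))
          + ENNReal.ofReal ((1/2) * M (c * u x)) ∂μ := by
        apply lintegral_mono
        intro x
        calc ENNReal.ofReal (Mbar (F x / (2*a)))
            ≤ ENNReal.ofReal ((1/2) * Mbar (d x / a) + (1/2) * M (c * u x)) :=
              ENNReal.ofReal_le_ofReal (key x)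
          _ ≤ _ := ENNReal.ofReal_add_le
    _ = (∫⁻ x, ENNReal.ofReal ((1/2) * Mbar (d x / a)) ∂μ)
          + ∫⁻ x, ENNReal.ofReal ((1/2) * M (c * u x)) ∂μ :=
        lintegral_add_left hmeas1 _
    _ < ⊤ := by
        apply ENNReal.add_lt_top.mpr
        constructor
        · refine lt_of_le_of_lt (lintegral_mono fun x => ?_) (hd a ha0)
          apply ENNReal.ofReal_le_ofReal
          nlinarith [hMbar_nonneg (d x / a)]
        · refine lt_of_le_of_lt (lintegral_mono fun x => ?_) (hu (1/c) (by positivity))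
          apply ENNReal.ofReal_le_ofReal
          have : u x / (1/c) = c * u x := by field_simp
          rw [this]
          nlinarith [hM_nonneg (c * u x)]
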